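/- arXiv:2404.08942 — 3 statements merged into one kernel-verified Lean document; each statement's English description precedes it below -/
import Mathlib

section
/- Let τ ∈ (−1, 1) and define h(z) = (z − τ)/(1 − τ·z). Let a, b ∈ ℂ with |a| = |b| = 1, Im(a) > 0, Im(b) > 0 and a ≠ b. Then v(a,b)/2 < v(h(a), h(b)) < 2·v(a,b). -/
/-
If `|a| = |b|` then `a - b = κ i (a + b)` for a real `κ`, and the real and imaginary parts of
`(a - x) · conj (b - x)` are a quadratic and a linear polynomial in the real point `x`. A suitable
combination of them is a perfect square, vanishing where the circle through `a` and `b` touches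
`ℝ`; this gives `v(a,b) = δ + A` with `δ = arctan (|a - b| / |a + b|)` and
`A = arctan (|a - b| / (2 √(Im a · Im b)))`. Now `A = arctan (sinh (ρ / 2))` for the hyperbolic
distance `ρ`, so `h` does not change it, while `0 < δ ≤ A` by AM-GM. Hence `v(a,b)` and
`v(h a, h b)` both lie in `(A, 2A]`.
-/

open Complex ComplexConjugate

/-- The visual angle metric of the upper half plane:
`v(a,b) = sup {∠(a,x,b) : x ∈ ℝ}`, where the angle at the real vertex `x`
is `|arg((a−x)/(b−x))|`. -/
noncomputable def vAngle (a b : ℂ) : ℝ :=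
  ⨆ x : ℝ, |((a - (x : ℂ)) / (b - (x : ℂ))).arg|

open Real

theorem Real.cos_arctan_add_arctan (x y : ℝ) :
    cos (Real.arctan x + Real.arctan y) = (1 - x * y) / (√(1 + x ^ 2) * √(1 + y ^ 2)) := by
  rw [cos_add, cos_arctan, cos_arctan, sin_arctan, sin_arctan]
  field_simp

theorem Real.sin_arctan_add_arctan (x y : ℝ) :
    sin (Real.arctan x + Real.arctan y) = (x + y) / (√(1 + x ^ 2) * √(1 + y ^ 2)) := by
  rw [sin_add, cos_arctan, cos_arctan, sin_arctan, sin_arctan]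
  field_simp

namespace Complex

theorem norm_mul_sin_sub_abs_arg (z : ℂ) (θ : ℝ) :
    ‖z‖ * Real.sin (θ - |arg z|) = Real.sin θ * z.re - Real.cos θ * |z.im| := by
  rw [Real.sin_sub, Real.cos_abs, ← abs_sin_eq_sin_abs_of_abs_le_pi (abs_arg_le_pi z),
    ← norm_mul_cos_arg z, ← norm_mul_sin_arg z, abs_mul, abs_norm]
  ring

theorem abs_arg_le_of_cos_mul_le {z : ℂ} {θ : ℝ} (hθ : 0 < θ)
    (h : Real.cos θ * |z.im| ≤ Real.sin θ * z.re) : |arg z| ≤ θ := by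
  by_contra! hlt
  have hz : z ≠ 0 := by rintro rfl; simp at hlt; linarith
  have hsin : Real.sin (θ - |arg z|) < 0 :=
    sin_neg_of_neg_of_neg_pi_lt (by linarith) (by linarith [abs_arg_le_pi z])
  nlinarith [norm_mul_sin_sub_abs_arg z θ, norm_pos_iff.2 hz]

theorem le_abs_arg_of_sin_mul_le {z : ℂ} (hz : z ≠ 0) {θ : ℝ} (hθπ : θ < π)
    (h : Real.sin θ * z.re ≤ Real.cos θ * |z.im|) : θ ≤ |arg z| := by
  by_contra! hlt
  have hsin : 0 < Real.sin (θ - |arg z|) :=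
    sin_pos_of_pos_of_lt_pi (by linarith) (by linarith [abs_nonneg (arg z)])
  nlinarith [norm_mul_sin_sub_abs_arg z θ, norm_pos_iff.2 hz]

theorem arg_div_eq_arg_mul_conj (z w : ℂ) : arg (z / w) = arg (z * conj w) := by
  rcases eq_or_ne w 0 with rfl | hw
  · simp
  rw [div_eq_mul_inv, inv_def, ← mul_assoc,
    arg_mul_real (inv_pos.2 (normSq_pos.2 hw))]

theorem abs_arg_le_arctan_add_arctan {z : ℂ} {x y : ℝ} (hx : 0 < x) (hy : 0 ≤ y)
    (h : (1 - x * y) * |z.im| ≤ (x + y) * z.re) : |arg z| ≤ Real.arctan x + Real.arctan y := by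
  refine abs_arg_le_of_cos_mul_le (by linarith [arctan_pos.2 hx, arctan_nonneg.2 hy]) ?_
  rw [cos_arctan_add_arctan, sin_arctan_add_arctan, div_mul_eq_mul_div, div_mul_eq_mul_div]
  exact div_le_div_of_nonneg_right h (by positivity)

theorem arctan_add_arctan_le_abs_arg {z : ℂ} (hz : z ≠ 0) {x y : ℝ}
    (h : (x + y) * z.re ≤ (1 - x * y) * |z.im|) : Real.arctan x + Real.arctan y ≤ |arg z| := by
  refine le_abs_arg_of_sin_mul_le hz
    (by linarith [arctan_lt_pi_div_two x, arctan_lt_pi_div_two y]) ?_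
  rw [cos_arctan_add_arctan, sin_arctan_add_arctan, div_mul_eq_mul_div, div_mul_eq_mul_div]
  exact div_le_div_of_nonneg_right h (by positivity)

end Complex

section ChordCone

variable {c κ r s : ℝ}

/- With `a = w (1 + κ i)`, `b = w (1 - κ i)`, `c = Re w`, `r = |w|` and `s = √(Im a · Im b)`,
the real and imaginary parts of `(a - x) · conj (b - x)` are `x² - 2cx + r²(1 - κ²)` and
`2κ(r² - cx)`, while `(s - κ²r, κ(s + r))` is a positive multiple of `(cos θ, sin θ)` for
`θ = arctan κ + arctan (κr/s)`. -/
theorem cone_quadratic_eq_sq (hrs : r ^ 2 - s ^ 2 = c ^ 2 * (1 + κ ^ 2)) (x : ℝ) :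
    (s + r) * (κ * (s + r) * (x ^ 2 - 2 * c * x + r ^ 2 * (1 - κ ^ 2))
      - (s - κ ^ 2 * r) * (2 * κ * (r ^ 2 - c * x)))
      = κ * ((s + r) * x - c * r * (1 + κ ^ 2)) ^ 2 := by
  linear_combination (κ * r ^ 2 * (1 + κ ^ 2)) * hrs

theorem cone_quadratic_bound (hκ : 0 ≤ κ) (hs : 0 < s) (hr : 0 ≤ r)
    (hrs : r ^ 2 - s ^ 2 = c ^ 2 * (1 + κ ^ 2)) (x : ℝ) :
    (s - κ ^ 2 * r) * |2 * κ * (r ^ 2 - c * x)|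
      ≤ κ * (s + r) * (x ^ 2 - 2 * c * x + r ^ 2 * (1 - κ ^ 2)) := by
  set P := x ^ 2 - 2 * c * x + r ^ 2 * (1 - κ ^ 2)
  set Q := 2 * κ * (r ^ 2 - c * x)
  have hsr : 0 < s + r := by linarith
  have hupper : (s - κ ^ 2 * r) * Q ≤ κ * (s + r) * P := by
    have := cone_quadratic_eq_sq hrs x
    nlinarith [mul_nonneg hκ (sq_nonneg ((s + r) * x - c * r * (1 + κ ^ 2)))]
  rcases le_total (s - κ ^ 2 * r) 0 with hneg | hpos
  · exact (mul_le_mul_of_nonpos_left (le_abs_self Q) hneg).trans hupper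
  -- the second tangent circle gives the bound for negative angles
  have hlower : -((s - κ ^ 2 * r) * Q) ≤ κ * (s + r) * P := by
    have hid : (1 + κ ^ 2) * (s + r) * (κ * (s + r) * P + (s - κ ^ 2 * r) * Q)
        = κ * ((1 + κ ^ 2) * ((s + r) * x - c * (2 * s + r * (1 - κ ^ 2))) ^ 2
          + 4 * (r + s) * (s - κ ^ 2 * r) * (s ^ 2 + κ ^ 2 * r ^ 2)) := by
      linear_combination (κ * (2 * s + r * (1 - κ ^ 2)) ^ 2) * hrs
    have : 0 ≤ (1 + κ ^ 2) * (s + r) * (κ * (s + r) * P + (s - κ ^ 2 * r) * Q) := by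
      rw [hid]; positivity
    nlinarith [mul_pos (by positivity : (0:ℝ) < 1 + κ ^ 2) hsr]
  rw [← abs_of_nonneg hpos, ← abs_mul]
  exact abs_le.2 ⟨by linarith, hupper⟩

theorem cone_quadratic_tangent (hsr : 0 < s + r) (hrs : r ^ 2 - s ^ 2 = c ^ 2 * (1 + κ ^ 2))
    {x : ℝ} (hx : (s + r) * x = c * r * (1 + κ ^ 2)) :
    2 * κ * (r ^ 2 - c * x) = 2 * κ * (r * s) ∧
      κ * (s + r) * (x ^ 2 - 2 * c * x + r ^ 2 * (1 - κ ^ 2))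
        = (s - κ ^ 2 * r) * (2 * κ * (r ^ 2 - c * x)) := by
  refine ⟨?_, ?_⟩
  · have : (s + r) * (r ^ 2 - c * x) = (s + r) * (r * s) := by
      linear_combination (-c) * hx + r * hrs
    rw [mul_left_cancel₀ hsr.ne' this]
  · have h := cone_quadratic_eq_sq hrs x
    rw [hx, sub_self, zero_pow two_ne_zero, mul_zero] at h
    linarith [(mul_eq_zero.1 h).resolve_left hsr.ne']

end ChordCone

theorem re_im_mul_one_add_I_sub_mul_conj (c : ℂ) (κ x : ℝ) :
    ((c * (1 + κ * I) - x) * conj (c * (1 - κ * I) - x)).re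
        = x ^ 2 - 2 * c.re * x + ‖c‖ ^ 2 * (1 - κ ^ 2) ∧
      ((c * (1 + κ * I) - x) * conj (c * (1 - κ * I) - x)).im
        = 2 * κ * (‖c‖ ^ 2 - c.re * x) := by
  rw [Complex.sq_norm, normSq_apply]
  constructor <;> · simp; ring

theorem vAngle_eq_of_forall_le {a b : ℂ} {θ : ℝ}
    (hle : ∀ x : ℝ, |arg ((a - x) * conj (b - x))| ≤ θ) {x₀ : ℝ}
    (hx₀ : θ ≤ |arg ((a - x₀) * conj (b - x₀))|) : vAngle a b = θ := by
  simp_rw [vAngle, arg_div_eq_arg_mul_conj]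
  exact le_antisymm (ciSup_le hle) (le_ciSup_of_le ⟨θ, Set.forall_mem_range.2 hle⟩ x₀ hx₀)

theorem vAngle_eq_of_sub_eq_mul_I_mul_add {a b : ℂ} {κ : ℝ} (hκ : 0 < κ)
    (hab : a - b = κ * I * (a + b)) (ha : 0 < a.im) (hb : 0 < b.im) :
    vAngle a b = Real.arctan κ + Real.arctan (‖a - b‖ / (2 * √(a.im * b.im))) := by
  set c := (a + b) / 2 with hc
  have hac : a = c * (1 + κ * I) := by linear_combination (1 / 2 : ℂ) * hab
  have hbc : b = c * (1 - κ * I) := by linear_combination (-1 / 2 : ℂ) * hab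
  set r := ‖c‖
  set s := √(a.im * b.im)
  have hs : 0 < s := Real.sqrt_pos.2 (mul_pos ha hb)
  have hr : 0 < r := norm_pos_iff.2 fun hc0 ↦ by simp [hac, hc0] at ha
  have hrs : r ^ 2 - s ^ 2 = c.re ^ 2 * (1 + κ ^ 2) := by
    rw [Real.sq_sqrt (mul_pos ha hb).le, Complex.sq_norm, normSq_apply, hac, hbc]
    simp
    ring
  have hdist : ‖a - b‖ / (2 * s) = κ * r / s := by
    rw [hab, norm_mul, norm_mul, norm_I, Complex.norm_real, Real.norm_of_nonneg hκ.le,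
      show a + b = 2 * c by rw [hc]; ring, norm_mul, Complex.norm_two]
    field_simp
    rfl
  have hκr : 1 - κ * (κ * r / s) = (s - κ ^ 2 * r) / s := by field_simp
  have hκs : κ + κ * r / s = κ * (s + r) / s := by field_simp
  have hsr : 0 < s + r := by positivity
  have hw := re_im_mul_one_add_I_sub_mul_conj c κ
  rw [← hac, ← hbc] at hw
  set x₀ := c.re * r * (1 + κ ^ 2) / (s + r)
  obtain ⟨hQ, hPQ⟩ := cone_quadratic_tangent hsr hrs (x := x₀) (mul_div_cancel₀ _ hsr.ne')
  have hne : (a - x₀) * conj (b - x₀) ≠ 0 := fun h0 ↦ by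
    have := congrArg im h0
    rw [(hw x₀).2, hQ, zero_im] at this
    have : 0 < 2 * κ * (r * s) := by positivity
    linarith
  rw [hdist]
  refine vAngle_eq_of_forall_le (fun x ↦ ?_) (x₀ := x₀) ?_
  · refine abs_arg_le_arctan_add_arctan hκ (by positivity) ?_
    rw [(hw x).1, (hw x).2, hκr, hκs, div_mul_eq_mul_div, div_mul_eq_mul_div]
    exact div_le_div_of_nonneg_right (cone_quadratic_bound hκ.le hs hr.le hrs x) hs.le
  · refine arctan_add_arctan_le_abs_arg hne ?_
    rw [(hw x₀).1, (hw x₀).2, hκr, hκs, div_mul_eq_mul_div, div_mul_eq_mul_div, hPQ, hQ,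
      abs_of_nonneg (by positivity)]

theorem vAngle_comm (a b : ℂ) : vAngle a b = vAngle b a := by
  simp_rw [vAngle, ← inv_div (a - _), abs_arg_inv]

theorem vAngle_self (a : ℂ) : vAngle a a = 0 := by
  simp [vAngle]

theorem vAngle_eq_of_norm_eq {a b : ℂ} (hn : ‖a‖ = ‖b‖) (ha : 0 < a.im) (hb : 0 < b.im) :
    vAngle a b = Real.arctan (‖a - b‖ / ‖a + b‖)
      + Real.arctan (‖a - b‖ / (2 * √(a.im * b.im))) := by
  have hsum : a + b ≠ 0 := fun h ↦ by linarith [congrArg im h, add_im a b, zero_im]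
  set κ := ((a - b) / (a + b)).im
  have hκ : a - b = κ * I * (a + b) := by
    have hre : ((a - b) / (a + b)).re = 0 := by
      have : normSq a = normSq b := by rw [← Complex.sq_norm, hn, Complex.sq_norm]
      rw [div_re, ← add_div]
      simp only [normSq_apply, sub_re, add_re, sub_im, add_im] at this ⊢
      rw [div_eq_zero_iff]; left; linear_combination this
    rw [← div_mul_cancel₀ (a - b) hsum]
    congr 1
    exact Complex.ext (by simpa using hre) (by simp [κ])
  have hratio : ‖a - b‖ / ‖a + b‖ = |κ| := by
    rw [hκ, norm_mul, norm_mul, norm_I, Complex.norm_real, Real.norm_eq_abs, mul_one,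
      mul_div_cancel_right₀ _ (norm_ne_zero_iff.2 hsum)]
  rw [hratio]
  rcases lt_trichotomy κ 0 with hneg | hzero | hpos
  · rw [vAngle_comm, vAngle_eq_of_sub_eq_mul_I_mul_add (neg_pos.2 hneg)
      (by push_cast; linear_combination -hκ) hb ha, norm_sub_rev, mul_comm b.im,
      abs_of_neg hneg]
  · obtain rfl : a = b := sub_eq_zero.1 (by simpa [hzero] using hκ)
    simp [vAngle_self, hzero]
  · rw [vAngle_eq_of_sub_eq_mul_I_mul_add hpos hκ ha hb, abs_of_pos hpos]

theorem arctan_norm_sub_div_norm_add_le {a b : ℂ} (ha : 0 < a.im) (hb : 0 < b.im) :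
    Real.arctan (‖a - b‖ / ‖a + b‖) ≤ Real.arctan (‖a - b‖ / (2 * √(a.im * b.im))) := by
  refine arctan_mono (div_le_div_of_nonneg_left (norm_nonneg _) (by positivity) ?_)
  calc 2 * √(a.im * b.im) ≤ a.im + b.im := by
        nlinarith [Real.sq_sqrt (mul_pos ha hb).le, Real.sqrt_nonneg (a.im * b.im),
          sq_nonneg (√(a.im * b.im) - a.im), sq_nonneg (a.im - b.im)]
    _ = (a + b).im := (add_im a b).symm
    _ ≤ ‖a + b‖ := im_le_norm _

theorem arctan_lt_vAngle_le_two_mul {a b : ℂ} (hn : ‖a‖ = ‖b‖) (ha : 0 < a.im)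
    (hb : 0 < b.im) (hab : a ≠ b) :
    Real.arctan (‖a - b‖ / (2 * √(a.im * b.im))) < vAngle a b ∧
      vAngle a b ≤ 2 * Real.arctan (‖a - b‖ / (2 * √(a.im * b.im))) := by
  have hsum : a + b ≠ 0 := fun h ↦ by linarith [congrArg im h, add_im a b, zero_im]
  have hpos : 0 < Real.arctan (‖a - b‖ / ‖a + b‖) :=
    arctan_pos.2 (div_pos (norm_pos_iff.2 (sub_ne_zero.2 hab)) (norm_pos_iff.2 hsum))
  rw [vAngle_eq_of_norm_eq hn ha hb]
  have := arctan_norm_sub_div_norm_add_le ha hb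
  constructor <;> linarith

noncomputable def realMoebius (p q r s : ℝ) (z : ℂ) : ℂ := (p * z + q) / (r * z + s)

section RealMoebius

variable {p q r s : ℝ} {z w : ℂ}

theorem realMoebius_denom_ne_zero (hdet : p * s - q * r ≠ 0) (hz : z.im ≠ 0) :
    (r : ℂ) * z + s ≠ 0 := by
  intro h
  have hr : r = 0 := by simpa [hz] using congrArg im h
  have hs : s = 0 := by simpa [hr] using congrArg re h
  simp [hr, hs] at hdet

theorem realMoebius_sub (hz : (r : ℂ) * z + s ≠ 0) (hw : (r : ℂ) * w + s ≠ 0) :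
    realMoebius p q r s z - realMoebius p q r s w
      = (p * s - q * r : ℝ) * (z - w) / ((r * z + s) * (r * w + s)) := by
  rw [realMoebius, realMoebius, div_sub_div _ _ hz hw]
  push_cast
  ring

theorem im_realMoebius (p q r s : ℝ) (z : ℂ) :
    (realMoebius p q r s z).im = (p * s - q * r) * z.im / normSq (r * z + s) := by
  rw [realMoebius, div_im, ← sub_div]
  congr 1
  simp
  ring

theorem norm_sub_div_sqrt_im_mul_im_realMoebius (hdet : p * s - q * r ≠ 0) (hz : z.im ≠ 0)
    (hw : w.im ≠ 0) :
    ‖realMoebius p q r s z - realMoebius p q r s w‖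
        / (2 * √((realMoebius p q r s z).im * (realMoebius p q r s w).im))
      = ‖z - w‖ / (2 * √(z.im * w.im)) := by
  have hz' := realMoebius_denom_ne_zero hdet hz
  have hw' := realMoebius_denom_ne_zero hdet hw
  set k := |p * s - q * r| / (‖(r : ℂ) * z + s‖ * ‖(r : ℂ) * w + s‖)
  have hk : 0 < k := by positivity
  have hnorm : ‖realMoebius p q r s z - realMoebius p q r s w‖ = k * ‖z - w‖ := by
    rw [realMoebius_sub hz' hw', norm_div, norm_mul, norm_mul, Complex.norm_real,
      Real.norm_eq_abs]
    ring
  have him : (realMoebius p q r s z).im * (realMoebius p q r s w).im = k ^ 2 * (z.im * w.im) := by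
    rw [im_realMoebius, im_realMoebius, ← Complex.sq_norm, ← Complex.sq_norm, div_pow, mul_pow,
      sq_abs]
    field_simp
  rw [hnorm, him, Real.sqrt_mul (sq_nonneg k), Real.sqrt_sq hk.le, mul_left_comm,
    mul_div_mul_left _ _ hk.ne']

theorem norm_realMoebius_of_norm_eq_one (hz : ‖z‖ = 1) (hden : (q : ℂ) * z + p ≠ 0) :
    ‖realMoebius p q q p z‖ = 1 := by
  have hconj : (q : ℂ) * z + p = z * conj (p * z + q) := by
    have : z * conj z = 1 := by rw [mul_conj, ← Complex.sq_norm, hz]; simp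
    simp only [map_add, map_mul, conj_ofReal]
    linear_combination (-(p : ℂ)) * this
  rw [realMoebius, norm_div, hconj, norm_mul, norm_conj, hz, one_mul]
  refine div_self fun h ↦ hden ?_
  rw [hconj, norm_eq_zero.1 h, map_zero, mul_zero]

end RealMoebius

theorem vAngle_quasi_invariance (τ : ℝ) (hτ : -1 < τ) (hτ' : τ < 1)
    (h : ℂ → ℂ) (hdef : ∀ z : ℂ, h z = (z - (τ : ℂ)) / (1 - (τ : ℂ) * z))
    (a b : ℂ) (ha : ‖a‖ = 1) (hb : ‖b‖ = 1)
    (hia : 0 < a.im) (hib : 0 < b.im) (hab : a ≠ b) :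
    vAngle a b / 2 < vAngle (h a) (h b) ∧ vAngle (h a) (h b) < 2 * vAngle a b := by
  have hh : h = realMoebius 1 (-τ) (-τ) 1 :=
    funext fun z ↦ by rw [hdef, realMoebius]; push_cast; ring
  have hdet : 0 < 1 * 1 - -τ * -τ := by nlinarith
  have hden : ∀ z : ℂ, 0 < z.im → ((-τ : ℝ) : ℂ) * z + (1 : ℝ) ≠ 0 :=
    fun z hz ↦ realMoebius_denom_ne_zero hdet.ne' hz.ne'
  have him : ∀ z : ℂ, 0 < z.im → 0 < (h z).im := fun z hz ↦ by
    rw [hh, im_realMoebius]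
    exact div_pos (mul_pos hdet hz) (normSq_pos.2 (hden z hz))
  have hne : h a ≠ h b := by
    rw [hh, ← sub_ne_zero, realMoebius_sub (hden a hia) (hden b hib)]
    exact div_ne_zero (mul_ne_zero (ofReal_ne_zero.2 hdet.ne') (sub_ne_zero.2 hab))
      (mul_ne_zero (hden a hia) (hden b hib))
  have hnorm : ‖h a‖ = ‖h b‖ := by
    rw [hh, norm_realMoebius_of_norm_eq_one ha (hden a hia),
      norm_realMoebius_of_norm_eq_one hb (hden b hib)]
  have hA := norm_sub_div_sqrt_im_mul_im_realMoebius hdet.ne' hia.ne' hib.ne'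
  rw [← hh] at hA
  obtain ⟨h₁, h₂⟩ := arctan_lt_vAngle_le_two_mul (ha.trans hb.symm) hia hib hab
  obtain ⟨h₃, h₄⟩ := arctan_lt_vAngle_le_two_mul hnorm (him a hia) (him b hib) hne
  rw [hA] at h₃ h₄
  constructor <;> linarith
end

section
/- For all a, b ∈ H²: arctan(sinh(ρ(a,b)/2)) ≤ v(a,b) ≤ 2·arctan(sinh(ρ(a,b)/2)). -/
/-!
Write `s = sinh(ρ(a,b)/2) = |a - b| / (2√(Im a · Im b))` and, for a real vertex `x`,
`z = (a - x) · conj (b - x)`, so that the visual angle at `x` is `|arg z|`.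

Upper bound: `|arg z| ≤ 2 arctan s` means `cos |arg z| ≥ (1 - s²)/(1 + s²)`, i.e.
`4 Im a Im b (|z| - Re z) ≤ |a - b|² (|z| + Re z)`. Multiply
`2 Im a Im b ≤ |z| + Re z` (as `|z| ≥ -Re ((a - x)(b - x))`) by `|z| - Re z ≥ 0` and
`2 (|z| - Re z) ≤ |a - b|²` (as `|a - b|² = |a - x|² + |b - x|² - 2 Re z`) by `|z| + Re z ≥ 0`.

Lower bound: it suffices to exhibit one vertex with `s · Re z ≤ |Im z|`. At
`x = (Re a + Re b)/2 ± √(Im a Im b)`, the sign chosen as that of `(Re a - Re b)(Im a - Im b)`,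
one gets `Re z ≤ 2 Im a Im b` and `|Im z| ≥ √(Im a Im b) · |a - b|`.
-/

open Complex ComplexConjugate

/-- The inverse hyperbolic tangent. -/
noncomputable def artanh (x : ℝ) : ℝ := Real.log ((1 + x) / (1 - x)) / 2

/-- The hyperbolic metric of the upper half plane:
`ρ(a,b) = 2·artanh(|a − b| / |a − conj(b)|)`. -/
noncomputable def rhoH (a b : ℂ) : ℝ :=
  2 * artanh (‖a - b‖ / ‖a - conj b‖)

lemma artanh_eq_real_artanh {t : ℝ} (ht : t ∈ Set.Icc (-1) 1) : artanh t = Real.artanh t := by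
  rw [artanh, Real.artanh_eq_half_log ht]; ring

lemma norm_sub_conj_sq (a b : ℂ) : ‖a - conj b‖ ^ 2 = ‖a - b‖ ^ 2 + 4 * (a.im * b.im) := by
  simp only [Complex.sq_norm, normSq_apply, sub_re, sub_im, conj_re, conj_im]; ring

lemma sinh_half_rhoH {a b : ℂ} (ha : 0 < a.im) (hb : 0 < b.im) :
    Real.sinh (rhoH a b / 2) = ‖a - b‖ / (2 * √(a.im * b.im)) := by
  set L := ‖a - b‖
  set M := ‖a - conj b‖
  have hM2 : M ^ 2 = L ^ 2 + 4 * (a.im * b.im) := norm_sub_conj_sq a b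
  have hAB : 0 < a.im * b.im := mul_pos ha hb
  have hLM : L < M := by nlinarith [norm_nonneg (a - b), norm_nonneg (a - conj b)]
  have hM : 0 < M := (norm_nonneg _).trans_lt hLM
  have ht : L / M ∈ Set.Ioo (-1) 1 :=
    ⟨by linarith [div_nonneg (norm_nonneg (a - b)) hM.le], (div_lt_one hM).2 hLM⟩
  have hsqrt : √(1 - (L / M) ^ 2) = 2 * √(a.im * b.im) / M := by
    rw [Real.sqrt_eq_iff_mul_self_eq_of_pos (by positivity)]
    field_simp
    rw [Real.sq_sqrt hAB.le]
    linarith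
  rw [rhoH, mul_div_cancel_left₀ _ two_ne_zero, artanh_eq_real_artanh (Set.Ioo_subset_Icc_self ht),
    Real.sinh_artanh ht, hsqrt]
  field_simp

lemma arg_div_eq_arg_mul_conj (u : ℂ) {w : ℂ} (hw : w ≠ 0) : (u / w).arg = (u * conj w).arg := by
  have h : u / w = ((normSq w)⁻¹ : ℝ) * (u * conj w) := by
    rw [div_eq_mul_inv, inv_def]; push_cast; ring
  rw [h, arg_real_mul _ (inv_pos.2 (normSq_pos.2 hw))]

lemma cos_two_mul_arctan (s : ℝ) : Real.cos (2 * Real.arctan s) = (1 - s ^ 2) / (1 + s ^ 2) := by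
  have h : 0 < 1 + s ^ 2 := by positivity
  rw [Real.cos_two_mul, Real.cos_arctan, div_pow, one_pow, Real.sq_sqrt h.le]
  field_simp
  ring

lemma abs_arg_le_two_mul_arctan {z : ℂ} {s : ℝ} (hz : z ≠ 0) (hs : 0 ≤ s)
    (h : (1 - s ^ 2) * ‖z‖ ≤ (1 + s ^ 2) * z.re) : |z.arg| ≤ 2 * Real.arctan s := by
  have hcos : Real.cos (2 * Real.arctan s) ≤ Real.cos |z.arg| := by
    rw [Real.cos_abs, cos_arg hz, cos_two_mul_arctan,
      div_le_div_iff₀ (by positivity) (norm_pos_iff.2 hz)]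
    linarith
  have hmem : 2 * Real.arctan s ∈ Set.Icc 0 Real.pi :=
    ⟨by linarith [Real.arctan_nonneg.2 hs], by linarith [Real.arctan_lt_pi_div_two s]⟩
  exact (Real.strictAntiOn_cos.le_iff_ge hmem ⟨abs_nonneg _, abs_arg_le_pi z⟩).1 hcos

lemma arctan_le_abs_arg {z : ℂ} {s : ℝ} (hz : z ≠ 0) (h : s * z.re ≤ |z.im|) :
    Real.arctan s ≤ |z.arg| := by
  rcases le_or_gt z.re 0 with hre | hre
  · have : Real.pi / 2 ≤ |z.arg| := not_lt.1 fun h' ↦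
      (abs_arg_lt_pi_div_two_iff.1 h').elim hre.not_gt hz
    linarith [Real.arctan_lt_pi_div_two s]
  · have hlt : |z.arg| < Real.pi / 2 := abs_arg_lt_pi_div_two_iff.2 (Or.inl hre)
    have htan : Real.tan |z.arg| = |z.im| / z.re := by
      rcases abs_cases z.arg with ⟨h1, h2⟩ | ⟨h1, h2⟩
      · rw [h1, tan_arg, abs_of_nonneg (arg_nonneg_iff.1 h2)]
      · rw [h1, Real.tan_neg, tan_arg, abs_of_neg (arg_neg_iff.1 h2), neg_div]
    calc Real.arctan s ≤ Real.arctan (Real.tan |z.arg|) := by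
          rw [htan]; exact Real.arctan_strictMono.monotone ((le_div_iff₀ hre).2 h)
      _ = |z.arg| := Real.arctan_tan (by linarith [abs_nonneg z.arg, Real.pi_pos]) hlt

lemma two_mul_im_mul_im_le (u w : ℂ) : 2 * (u.im * w.im) ≤ ‖u‖ * ‖w‖ + (u * conj w).re := by
  have h := neg_le_of_abs_le (abs_re_le_norm (u * w))
  rw [norm_mul] at h
  simp only [mul_re, conj_re, conj_im] at h ⊢
  linarith

lemma two_mul_sub_re_le_norm_sub_sq (u w : ℂ) :
    2 * (‖u‖ * ‖w‖ - (u * conj w).re) ≤ ‖u - w‖ ^ 2 := by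
  rw [Complex.sq_norm, normSq_sub, ← Complex.sq_norm, ← Complex.sq_norm]
  nlinarith [sq_nonneg (‖u‖ - ‖w‖)]

lemma abs_arg_div_le_two_mul_arctan {u w : ℂ} (hu : 0 < u.im) (hw : 0 < w.im) :
    |(u / w).arg| ≤ 2 * Real.arctan (‖u - w‖ / (2 * √(u.im * w.im))) := by
  have hu0 : u ≠ 0 := fun h ↦ by simp [h] at hu
  have hw0 : w ≠ 0 := fun h ↦ by simp [h] at hw
  have hAB : 0 < u.im * w.im := mul_pos hu hw
  set s := ‖u - w‖ / (2 * √(u.im * w.im))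
  have hs : s ^ 2 * (4 * (u.im * w.im)) = ‖u - w‖ ^ 2 := by
    rw [div_pow, mul_pow, Real.sq_sqrt hAB.le]; field_simp; ring
  set z := u * conj w
  have hN : ‖z‖ = ‖u‖ * ‖w‖ := by rw [norm_mul, norm_conj]
  rw [arg_div_eq_arg_mul_conj u hw0]
  refine abs_arg_le_two_mul_arctan (mul_ne_zero hu0 ((map_ne_zero _).2 hw0)) (by positivity) ?_
  have hNR : 0 ≤ ‖z‖ - z.re := sub_nonneg.2 (re_le_norm z)
  have hsum := two_mul_im_mul_im_le u w
  have hdiff := two_mul_sub_re_le_norm_sub_sq u w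
  rw [← hN] at hsum hdiff
  have key : 4 * (u.im * w.im) * (‖z‖ - z.re) ≤ 4 * (u.im * w.im) * (s ^ 2 * (‖z‖ + z.re)) :=
    calc 4 * (u.im * w.im) * (‖z‖ - z.re) ≤ 2 * (‖z‖ + z.re) * (‖z‖ - z.re) := by
          linarith [mul_le_mul_of_nonneg_right hsum hNR]
      _ ≤ ‖u - w‖ ^ 2 * (‖z‖ + z.re) := by
          linarith [mul_le_mul_of_nonneg_left hdiff (by linarith : 0 ≤ ‖z‖ + z.re)]
      _ = 4 * (u.im * w.im) * (s ^ 2 * (‖z‖ + z.re)) := by rw [← hs]; ring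
  linarith [le_of_mul_le_mul_left key (by positivity)]

lemma exists_arctan_le_abs_arg_div {a b : ℂ} (ha : 0 < a.im) (hb : 0 < b.im) :
    ∃ x : ℝ, Real.arctan (‖a - b‖ / (2 * √(a.im * b.im))) ≤ |((a - x) / (b - x)).arg| := by
  have hAB : 0 < a.im * b.im := mul_pos ha hb
  set D := √(a.im * b.im)
  have hD2 : D ^ 2 = a.im * b.im := Real.sq_sqrt hAB.le
  obtain ⟨σ, hσ, hsign⟩ : ∃ σ : ℝ, σ ^ 2 = 1 ∧ 0 ≤ σ * ((a.re - b.re) * (a.im - b.im)) := by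
    rcases le_total 0 ((a.re - b.re) * (a.im - b.im)) with h | h
    exacts [⟨1, by norm_num, by linarith⟩, ⟨-1, by norm_num, by linarith⟩]
  refine ⟨(a.re + b.re) / 2 + σ * D, ?_⟩
  set x := (a.re + b.re) / 2 + σ * D
  have hu0 : a - x ≠ 0 := fun h ↦ ha.ne' (by simpa using congrArg im h)
  have hw0 : b - x ≠ 0 := fun h ↦ hb.ne' (by simpa using congrArg im h)
  rw [arg_div_eq_arg_mul_conj _ hw0]
  set z := (a - x) * conj (b - x)
  have hre : z.re = 2 * D ^ 2 - (a.re - b.re) ^ 2 / 4 := by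
    simp only [z, x, mul_re, conj_re, conj_im, sub_re, sub_im, ofReal_re, ofReal_im]
    linear_combination D ^ 2 * hσ - hD2
  have him : z.im = -((a.re - b.re) * (a.im + b.im) / 2 + σ * D * (a.im - b.im)) := by
    simp only [z, x, mul_im, conj_re, conj_im, sub_re, sub_im, ofReal_re, ofReal_im]
    ring
  have hL : ‖a - b‖ ^ 2 = (a.re - b.re) ^ 2 + (a.im - b.im) ^ 2 := by
    simp only [Complex.sq_norm, normSq_apply, sub_re, sub_im]; ring
  have hI : D * ‖a - b‖ ≤ |z.im| := by
    have hsq : z.im ^ 2 - (D * ‖a - b‖) ^ 2 = ((a.re - b.re) * (a.im - b.im) / 2) ^ 2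
        + σ * ((a.re - b.re) * (a.im - b.im)) * (D * (a.im + b.im)) := by
      rw [him, mul_pow, hL]
      linear_combination (D ^ 2 * (a.im - b.im) ^ 2) * hσ - (a.re - b.re) ^ 2 * hD2
    refine (le_abs_self _).trans (sq_le_sq.1 ?_)
    linarith [sq_nonneg ((a.re - b.re) * (a.im - b.im) / 2),
      mul_nonneg hsign (by positivity : 0 ≤ D * (a.im + b.im))]
  refine arctan_le_abs_arg (mul_ne_zero hu0 ((map_ne_zero _).2 hw0)) ?_
  calc ‖a - b‖ / (2 * D) * z.re ≤ ‖a - b‖ / (2 * D) * (2 * D ^ 2) :=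
        mul_le_mul_of_nonneg_left (by rw [hre]; linarith [sq_nonneg (a.re - b.re)]) (by positivity)
    _ = D * ‖a - b‖ := by field_simp
    _ ≤ |z.im| := hI

theorem vAngle_arctan_bounds (a b : ℂ) (hia : 0 < a.im) (hib : 0 < b.im) :
    Real.arctan (Real.sinh (rhoH a b / 2)) ≤ vAngle a b ∧
    vAngle a b ≤ 2 * Real.arctan (Real.sinh (rhoH a b / 2)) := by
  have hbdd : BddAbove (Set.range fun x : ℝ ↦ |((a - x) / (b - x)).arg|) :=
    ⟨Real.pi, by rintro _ ⟨x, rfl⟩; exact abs_arg_le_pi _⟩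
  rw [sinh_half_rhoH hia hib]
  constructor
  · obtain ⟨x, hx⟩ := exists_arctan_le_abs_arg_div hia hib
    exact hx.trans (le_ciSup hbdd x)
  · refine ciSup_le fun x ↦ ?_
    simpa using abs_arg_div_le_two_mul_arctan (u := a - x) (w := b - x) (by simpa) (by simpa)
end

section
/- Let a, b ∈ H² with Re(a) ≠ Re(b). Set v = ( 2·a·b − |a|² − |b|² − |a−b|·|a−conj(b)| ) / (2i·Im(a+b)) and s = ( 2·a·b − |a|² − |b|² + |a−b|·|a−conj(b)| ) / (2i·Im(a+b)). Then v is collinear with the pair a, a⋆ and with the pair b, b⋆, and s is collinear with the pair a, b⋆ and with the pair b, a⋆; that is, v = LIS[a,a⋆,b,b⋆] and s = LIS[a,b⋆,b,a⋆]. -/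
/-!
Three points z₁, z₂, z₃ of ℂ are collinear as soon as (z₃ - z₁) * conj (z₂ - z₁) is real. With
ρ = |a - b| |a - conj b|, the points v, s, a⋆, b⋆ are rational functions of a, conj a, b, conj b
and ±ρ, and the symmetries a ↔ b, ρ ↔ -ρ reduce the four collinearities to one. Treating conj a and
conj b as independent variables, that one becomes a rational identity which, after clearing
denominators, is a multiple of ρ² = (a - b)(conj a - conj b)(a - conj b)(conj a - b).
-/

open Complex ComplexConjugate

lemma collinear_of_im_mul_conj_eq_zero {z₁ z₂ z₃ : ℂ}
    (h : ((z₃ - z₁) * conj (z₂ - z₁)).im = 0) : Collinear ℝ ({z₁, z₂, z₃} : Set ℂ) := by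
  rcases eq_or_ne z₂ z₁ with rfl | hne
  · simpa using collinear_pair ℝ z₂ z₃
  set w := z₂ - z₁
  have hw : w ≠ 0 := sub_ne_zero.mpr hne
  have hreal : (((z₃ - z₁) * conj w).re : ℂ) = (z₃ - z₁) * conj w :=
    conj_eq_iff_re.mp (conj_eq_iff_im.mpr h)
  rw [collinear_iff_of_mem (Set.mem_insert z₁ _)]
  refine ⟨w, ?_⟩
  simp only [Set.mem_insert_iff, Set.mem_singleton_iff, forall_eq_or_imp, forall_eq]
  refine ⟨⟨0, by simp⟩, ⟨1, by simp [w]⟩, ⟨((z₃ - z₁) * conj w).re / normSq w, ?_⟩⟩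
  rw [real_smul, ofReal_div, hreal, vadd_eq_add, ← mul_conj]
  field_simp [hw, (map_ne_zero _).mpr hw]
  ring

lemma sub_mul_sub_eq_sub_mul_sub_of_sq_eq {K : Type*} [Field K] (a a' b b' L v v' t : K)
    (hL : L ^ 2 = (a - b) * (a' - b') * ((a - b') * (a' - b)))
    (hQ : a + b - a' - b' ≠ 0) (hP : a + a' - b - b' ≠ 0)
    (hv : v = (2 * a * b - a * a' - b * b' - L) / (a + b - a' - b'))
    (hv' : v' = (2 * a' * b' - a' * a - b' * b - L) / (a' + b' - a - b))
    (ht : t = (a * a' - b * b' + L) / (a + a' - b - b')) :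
    (t - v) * (a' - v') = (t - v') * (a - v) := by
  have hQ' : a' + b' - a - b ≠ 0 := fun h => hQ (by linear_combination -h)
  subst hv hv' ht
  field_simp
  linear_combination 2 * (a + b - a' - b') * hL

/-- With `L = ±‖a - b‖ * ‖a - conj b‖`, `idealEndpoint a b L` is `a⋆` resp. `b⋆`, and
`chordMeet a b L` is `v` resp. `s`. -/
noncomputable def idealEndpoint (a b : ℂ) (L : ℝ) : ℝ :=
  (‖a‖ ^ 2 - ‖b‖ ^ 2 + L) / (2 * (a - b).re)

noncomputable def chordMeet (a b : ℂ) (L : ℝ) : ℂ :=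
  (2 * a * b - ((‖a‖ ^ 2 : ℝ) : ℂ) - ((‖b‖ ^ 2 : ℝ) : ℂ) - (L : ℂ)) / (2 * I * ((a + b).im : ℂ))

lemma chordMeet_comm (a b : ℂ) (L : ℝ) : chordMeet b a L = chordMeet a b L := by
  rw [chordMeet, chordMeet, add_comm b]
  ring

lemma idealEndpoint_comm (a b : ℂ) (L : ℝ) : idealEndpoint b a L = idealEndpoint a b (-L) := by
  rw [idealEndpoint, idealEndpoint, ← neg_sub a b, neg_re]
  ring

lemma norm_sub_conj_comm (a b : ℂ) : ‖b - conj a‖ = ‖a - conj b‖ := by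
  rw [← norm_neg, ← RCLike.norm_conj]
  simp

lemma add_sub_conj_sub_conj (a b : ℂ) : a + b - conj a - conj b = 2 * I * (a + b).im := by
  have h := sub_conj (a + b)
  rw [map_add, ofReal_mul, ofReal_ofNat] at h
  linear_combination h

lemma add_conj_sub_sub_conj (a b : ℂ) : a + conj a - b - conj b = 2 * (a - b).re := by
  have h := add_conj (a - b)
  rw [map_sub, ofReal_mul, ofReal_ofNat] at h
  linear_combination h

lemma chordMeet_eq (a b : ℂ) (L : ℝ) :
    chordMeet a b L = (2 * a * b - a * conj a - b * conj b - L) / (a + b - conj a - conj b) := by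
  rw [chordMeet, ← add_sub_conj_sub_conj]
  push_cast
  rw [mul_conj', mul_conj']

lemma idealEndpoint_eq (a b : ℂ) (L : ℝ) :
    (idealEndpoint a b L : ℂ) = (a * conj a - b * conj b + L) / (a + conj a - b - conj b) := by
  rw [idealEndpoint, add_conj_sub_sub_conj]
  push_cast
  rw [mul_conj', mul_conj']

lemma collinear_chordMeet_idealEndpoint {a b : ℂ} {L : ℝ} (him : (a + b).im ≠ 0)
    (hre : (a - b).re ≠ 0) (hL : |L| = ‖a - b‖ * ‖a - conj b‖) :
    Collinear ℝ ({chordMeet a b L, a, (idealEndpoint a b L : ℂ)} : Set ℂ) := by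
  have hL2 : (L : ℂ) ^ 2 = (a - b) * (conj a - conj b) * ((a - conj b) * (conj a - b)) := by
    have h : L ^ 2 = ‖a - b‖ ^ 2 * ‖a - conj b‖ ^ 2 := by rw [← sq_abs, hL, mul_pow]
    rw [show (L : ℂ) ^ 2 = (‖a - b‖ : ℂ) ^ 2 * (‖a - conj b‖ : ℂ) ^ 2 by exact_mod_cast h,
      ← mul_conj', ← mul_conj', map_sub, map_sub, conj_conj]
  have hQ : a + b - conj a - conj b ≠ 0 := by
    rw [add_sub_conj_sub_conj]
    exact mul_ne_zero (mul_ne_zero two_ne_zero I_ne_zero) (ofReal_ne_zero.mpr him)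
  have hP : a + conj a - b - conj b ≠ 0 := by
    rw [add_conj_sub_sub_conj]
    exact mul_ne_zero two_ne_zero (ofReal_ne_zero.mpr hre)
  apply collinear_of_im_mul_conj_eq_zero
  rw [← conj_eq_iff_im, map_mul, conj_conj, map_sub, conj_ofReal, map_sub]
  refine (sub_mul_sub_eq_sub_mul_sub_of_sq_eq a (conj a) b (conj b) L _ _ _ hL2 hQ hP
    (chordMeet_eq a b L) ?_ (idealEndpoint_eq a b L)).symm
  rw [chordMeet_eq]
  simp only [map_div₀, map_sub, map_add, map_mul, map_ofNat, conj_ofReal, conj_conj]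

lemma collinear_chordMeet_idealEndpoint_neg {a b : ℂ} {L : ℝ} (him : (a + b).im ≠ 0)
    (hre : (a - b).re ≠ 0) (hL : |L| = ‖a - b‖ * ‖a - conj b‖) :
    Collinear ℝ ({chordMeet a b L, b, (idealEndpoint a b (-L) : ℂ)} : Set ℂ) := by
  rw [← chordMeet_comm, ← idealEndpoint_comm]
  refine collinear_chordMeet_idealEndpoint (by rwa [add_comm]) ?_ ?_
  · rwa [← neg_sub, neg_re, neg_ne_zero]
  · rwa [norm_sub_rev, norm_sub_conj_comm]

theorem v_s_line_intersections (a b : ℂ) (hia : 0 < a.im) (hib : 0 < b.im)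
    (hre : a.re ≠ b.re)
    (astar bstar : ℝ)
    (hastar : astar = (‖a‖ ^ 2 - ‖b‖ ^ 2 +
        ‖a - b‖ * ‖a - conj b‖) / (2 * (a - b).re))
    (hbstar : bstar = (‖a‖ ^ 2 - ‖b‖ ^ 2 -
        ‖a - b‖ * ‖a - conj b‖) / (2 * (a - b).re))
    (v s : ℂ)
    (hv : v = (2 * a * b - ((‖a‖ ^ 2 : ℝ) : ℂ) - ((‖b‖ ^ 2 : ℝ) : ℂ) -
        ((‖a - b‖ * ‖a - conj b‖ : ℝ) : ℂ)) /
        (2 * Complex.I * (((a + b).im : ℝ) : ℂ)))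
    (hs : s = (2 * a * b - ((‖a‖ ^ 2 : ℝ) : ℂ) - ((‖b‖ ^ 2 : ℝ) : ℂ) +
        ((‖a - b‖ * ‖a - conj b‖ : ℝ) : ℂ)) /
        (2 * Complex.I * (((a + b).im : ℝ) : ℂ))) :
    Collinear ℝ ({v, a, (astar : ℂ)} : Set ℂ) ∧
    Collinear ℝ ({v, b, (bstar : ℂ)} : Set ℂ) ∧
    Collinear ℝ ({s, a, (bstar : ℂ)} : Set ℂ) ∧
    Collinear ℝ ({s, b, (astar : ℂ)} : Set ℂ) := by
  set ρ := ‖a - b‖ * ‖a - conj b‖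
  have him : (a + b).im ≠ 0 := by
    rw [add_im]
    exact (add_pos hia hib).ne'
  have hre' : (a - b).re ≠ 0 := by rwa [sub_re, sub_ne_zero]
  have hρ : |ρ| = ρ := abs_of_nonneg (by positivity)
  have hρneg : |-ρ| = ρ := by rw [abs_neg, hρ]
  have hv' : v = chordMeet a b ρ := hv
  have hastar' : astar = idealEndpoint a b ρ := hastar
  have hbstar' : bstar = idealEndpoint a b (-ρ) := by rw [hbstar, idealEndpoint, sub_eq_add_neg]
  have hs' : s = chordMeet a b (-ρ) := by
    rw [hs, chordMeet]
    push_cast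
    ring
  refine ⟨?_, ?_, ?_, ?_⟩
  · rw [hv', hastar']
    exact collinear_chordMeet_idealEndpoint him hre' hρ
  · rw [hv', hbstar']
    exact collinear_chordMeet_idealEndpoint_neg him hre' hρ
  · rw [hs', hbstar']
    exact collinear_chordMeet_idealEndpoint him hre' hρneg
  · have h := collinear_chordMeet_idealEndpoint_neg him hre' hρneg
    rwa [neg_neg, ← hs', ← hastar'] at h
end
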